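/- For antichains α, β of subsets of a finite set N with α ≤ β, β is an immediate successor of α (i.e., α < β and no antichain γ satisfies α < γ < β) if and only if α < β, β \ α = {S} for a single set S, and every proper subset X of S is contained in some member of α. -/

import Mathlib

/-!
If `β` covers `α`, pick `S ∈ β \ α`. Another new member `T` of `β`, or a proper subset `X` of `S`
not below any member of `α`, could be added to `α`; keeping the maximal elements then gives an
antichain strictly between `α` and `β`, since it still misses `S`. Conversely, if `β \ α = {S}`
and `α` covers every proper subset of `S`, an antichain `γ` with `α ≤ γ ≤ β` either contains `S`,
and then `β ≤ γ`, or does not, and then every member of `γ` lies below a member of `α`;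
antisymmetry gives `γ = β` or `γ = α`.
-/

open Finset

/-- Families of finite subsets of ℕ. -/
abbrev Fam := Finset (Finset ℕ)

/-- `α` is an antichain of subsets of `N`: all members are subsets of `N`
and no member is a (proper) subset of another. -/
def IsAC (N : Finset ℕ) (α : Fam) : Prop :=
  (∀ A ∈ α, A ⊆ N) ∧ ∀ A ∈ α, ∀ B ∈ α, A ⊆ B → A = B

instance (N : Finset ℕ) : DecidablePred (IsAC N) := fun α => by
  unfold IsAC; infer_instance

/-- The partial order on antichains: every member of `α` is contained in some member of `β`. -/
def amle (α β : Fam) : Prop := ∀ A ∈ α, ∃ B ∈ β, A ⊆ B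

instance (α β : Fam) : Decidable (amle α β) := by
  unfold amle; infer_instance

/-- `sup` of a family: its maximal elements under inclusion. -/
def maxels (S : Fam) : Fam := S.filter (fun A => ∀ B ∈ S, A ⊆ B → A = B)

/-- The span of an antichain: the union of its members. -/
def sp (α : Fam) : Finset ℕ := α.sup id

/-- Join: maximal elements of the union. -/
def joinAC (α β : Fam) : Fam := maxels (α ∪ β)

/-- Meet: maximal elements of the pairwise intersections. -/
def meetAC (α β : Fam) : Fam := maxels ((α ×ˢ β).image fun p => p.1 ∩ p.2)

/-- Projection onto `M`: maximal elements of {A ∩ M : A ∈ α}. -/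
def proj (M : Finset ℕ) (α : Fam) : Fam := maxels (α.image (· ∩ M))

/-- External product. -/
def xprod (α β : Fam) : Fam :=
  maxels ((α ×ˢ β).image fun p => (p.1 \ sp β) ∪ (p.2 \ sp α) ∪ (p.1 ∩ p.2))

/-- The finite set of all antichains of subsets of `N`. -/
def AMTf (N : Finset ℕ) : Finset Fam := N.powerset.powerset.filter (IsAC N)

/-- The interval `[a, b]` inside `AMTf N`, as a `Finset`. -/
def intervalF (N : Finset ℕ) (a b : Fam) : Finset Fam :=
  (AMTf N).filter (fun κ => amle a κ ∧ amle κ b)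

/-- The interval `[a, b]` of antichains of subsets of `N`, as a `Set`. -/
def intervalSet (N : Finset ℕ) (a b : Fam) : Set Fam :=
  {κ | IsAC N κ ∧ amle a κ ∧ amle κ b}

/-- n-ary join of a family indexed by the members of `σ`. -/
def bigJoin (σ : Fam) (κ : Finset ℕ → Fam) : Fam := maxels (σ.sup κ)

/-- n-ary external product of a family indexed by the members of `σ`. -/
noncomputable def bigX (σ : Fam) (κ : Finset ℕ → Fam) : Fam :=
  (σ.toList.map κ).foldr xprod {(∅ : Finset ℕ)}

/-- Nonempty antichains of subsets of `S` with span exactly `S`. -/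
def Upsf (S : Finset ℕ) : Finset Fam :=
  S.powerset.powerset.filter (fun κ => IsAC S κ ∧ κ ≠ ∅ ∧ sp κ = S)

section Antichains

variable {N : Finset ℕ} {α β γ F : Fam} {S X : Finset ℕ}

lemma amle_of_subset (h : α ⊆ β) : amle α β := fun A hA => ⟨A, h hA, subset_rfl⟩

lemma amle_trans (h₁ : amle α β) (h₂ : amle β γ) : amle α γ := fun A hA => by
  obtain ⟨B, hB, hAB⟩ := h₁ A hA
  obtain ⟨C, hC, hBC⟩ := h₂ B hB
  exact ⟨C, hC, hAB.trans hBC⟩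

lemma subset_of_amle_of_amle (hα : IsAC N α) (h₁ : amle α β) (h₂ : amle β α) : α ⊆ β := by
  intro A hA
  obtain ⟨B, hB, hAB⟩ := h₁ A hA
  obtain ⟨A', hA', hBA'⟩ := h₂ B hB
  obtain rfl := hα.2 A hA A' hA' (hAB.trans hBA')
  exact (hAB.antisymm hBA') ▸ hB

lemma amle_antisymm (hα : IsAC N α) (hβ : IsAC N β) (h₁ : amle α β) (h₂ : amle β α) :
    α = β :=
  (subset_of_amle_of_amle hα h₁ h₂).antisymm (subset_of_amle_of_amle hβ h₂ h₁)

lemma mem_maxels : X ∈ maxels F ↔ X ∈ F ∧ ∀ B ∈ F, X ⊆ B → X = B :=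
  mem_filter

lemma maxels_subset (F : Fam) : maxels F ⊆ F := filter_subset _ _

lemma amle_maxels (F : Fam) : amle F (maxels F) := by
  intro A hA
  obtain ⟨M, hAM, hMF, hmax⟩ := F.exists_le_maximal hA
  exact ⟨M, mem_maxels.2 ⟨hMF, fun B hB hMB => hMB.antisymm (hmax hB hMB)⟩, hAM⟩

lemma isAC_maxels (hF : ∀ A ∈ F, A ⊆ N) : IsAC N (maxels F) :=
  ⟨fun A hA => hF A (maxels_subset F hA),
    fun _ hA B hB hAB => (mem_maxels.1 hA).2 B (maxels_subset F hB) hAB⟩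

lemma not_exists_superset_of_mem_sdiff (hβ : IsAC N β) (hle : amle α β) (hS : S ∈ β \ α) :
    ¬ ∃ A ∈ α, S ⊆ A := by
  rintro ⟨A, hA, hSA⟩
  obtain ⟨B, hB, hAB⟩ := hle A hA
  obtain rfl := hβ.2 S (mem_sdiff.1 hS).1 B hB (hSA.trans hAB)
  exact (mem_sdiff.1 hS).2 ((hSA.antisymm hAB) ▸ hA)

lemma sdiff_nonempty_of_amle_of_ne (hα : IsAC N α) (hβ : IsAC N β) (hle : amle α β)
    (hne : α ≠ β) : (β \ α).Nonempty :=
  sdiff_nonempty.2 fun hβα => hne (amle_antisymm hα hβ hle (amle_of_subset hβα))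

lemma exists_between_of_not_exists_superset (hβ : IsAC N β) (hle : amle α β)
    (hXβ : ∃ B ∈ β, X ⊆ B) (hXα : ¬ ∃ A ∈ α, X ⊆ A)
    (hS : S ∈ β) (hSX : ¬ S ⊆ X) (hSα : ¬ ∃ A ∈ α, S ⊆ A) :
    ∃ γ : Fam, IsAC N γ ∧ (amle α γ ∧ α ≠ γ) ∧ (amle γ β ∧ γ ≠ β) := by
  have hXβ' : amle (insert X α) β := by
    intro A hA
    obtain rfl | hA := mem_insert.1 hA
    exacts [hXβ, hle A hA]
  refine ⟨maxels (insert X α), isAC_maxels fun A hA => ?_, ⟨?_, ?_⟩, ?_, ?_⟩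
  · obtain ⟨B, hB, hAB⟩ := hXβ' A hA
    exact hAB.trans (hβ.1 B hB)
  · exact amle_trans (amle_of_subset (subset_insert X α)) (amle_maxels _)
  · intro hαγ
    exact hXα (hαγ ▸ amle_maxels _ X (mem_insert_self X α))
  · exact amle_trans (amle_of_subset (maxels_subset _)) hXβ'
  · intro hγβ
    obtain rfl | hSα' := mem_insert.1 (maxels_subset _ (hγβ ▸ hS))
    exacts [hSX subset_rfl, hSα ⟨S, hSα', subset_rfl⟩]

lemma eq_or_eq_of_sdiff_eq_singleton (hα : IsAC N α) (hβ : IsAC N β) (hγ : IsAC N γ)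
    (hαβ : β \ α = {S}) (hmin : ∀ X : Finset ℕ, X ⊂ S → ∃ A ∈ α, X ⊆ A)
    (hαγ : amle α γ) (hγβ : amle γ β) : γ = α ∨ γ = β := by
  have hβα : β ⊆ insert S α := by
    rw [insert_eq]
    exact sdiff_le_iff'.1 hαβ.le
  by_cases hSγ : S ∈ γ
  · refine .inr (amle_antisymm hγ hβ hγβ fun B hB => ?_)
    obtain rfl | hBα := mem_insert.1 (hβα hB)
    exacts [⟨B, hSγ, subset_rfl⟩, hαγ B hBα]
  · refine .inl (amle_antisymm hγ hα (fun C hC => ?_) hαγ)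
    obtain ⟨B, hB, hCB⟩ := hγβ C hC
    obtain rfl | hBα := mem_insert.1 (hβα hB)
    exacts [hmin C (ssubset_of_subset_of_ne hCB (by rintro rfl; exact hSγ hC)),
      ⟨B, hBα, hCB⟩]

end Antichains

/-- characterisation of immediate successors among antichains. -/
theorem immediate_successor_iff (N : Finset ℕ) (α β : Fam)
    (hα : IsAC N α) (hβ : IsAC N β) :
    ((amle α β ∧ α ≠ β) ∧
      ¬ ∃ γ : Fam, IsAC N γ ∧ (amle α γ ∧ α ≠ γ) ∧ (amle γ β ∧ γ ≠ β)) ↔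
    ((amle α β ∧ α ≠ β) ∧
      ∃ S : Finset ℕ, β \ α = {S} ∧ ∀ X : Finset ℕ, X ⊂ S → ∃ X' ∈ α, X ⊆ X') := by
  refine and_congr_right fun ⟨hle, hne⟩ => ⟨fun hno => ?_, ?_⟩
  · obtain ⟨S, hS⟩ := sdiff_nonempty_of_amle_of_ne hα hβ hle hne
    have hSβ := (mem_sdiff.1 hS).1
    have hSα := not_exists_superset_of_mem_sdiff hβ hle hS
    refine ⟨S, eq_singleton_iff_unique_mem.2 ⟨hS, fun T hT => ?_⟩, fun X hXS => ?_⟩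
    · by_contra hTS
      exact hno <| exists_between_of_not_exists_superset hβ hle
        ⟨T, (mem_sdiff.1 hT).1, subset_rfl⟩ (not_exists_superset_of_mem_sdiff hβ hle hT)
        hSβ (fun hST => hTS (hβ.2 S hSβ T (mem_sdiff.1 hT).1 hST).symm) hSα
    · by_contra hXα
      exact hno <| exists_between_of_not_exists_superset hβ hle
        ⟨S, hSβ, hXS.subset⟩ hXα hSβ hXS.not_subset hSα
  · rintro ⟨S, hαβ, hmin⟩ ⟨γ, hγ, ⟨hαγ, hαneγ⟩, hγβ, hγneβ⟩
    obtain rfl | rfl := eq_or_eq_of_sdiff_eq_singleton hα hβ hγ hαβ hmin hαγ hγβ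
    exacts [hαneγ rfl, hγneβ rfl]
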